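/- arXiv:1909.08436 — 6 statements merged into one kernel-verified Lean document; each statement's English description precedes it below -/
import Mathlib

section
/- Under assumption (H.1) and (K), if f(x)>0 and nh^{2η+p}|log h|^{-1}=O(1), then the kernel density estimator satisfies |n^{-1}Σ_{i=1}^n K_h(x−X_i)−f(x)|=O_P((nh^p)^{-1/2}|log h|^{1/2}). -/
open MeasureTheory ProbabilityTheory Filter Set

lemma rpow_le_one_add {t η : ℝ} (ht : 0 ≤ t) (hη0 : 0 < η) (hη1 : η ≤ 1) :
    t ^ η ≤ 1 + t := by
  rcases le_total t 1 with h1 | h1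
  · have : t ^ η ≤ 1 := Real.rpow_le_one ht h1 hη0.le
    linarith
  · have : t ^ η ≤ t ^ (1:ℝ) := Real.rpow_le_rpow_of_exponent_le h1 hη1
    rw [Real.rpow_one] at this
    linarith

lemma change_var {p : ℕ} (φ : EuclideanSpace ℝ (Fin p) → ℝ) (x : EuclideanSpace ℝ (Fin p))
    {h : ℝ} (hh : 0 < h) :
    ∫ y, φ (h⁻¹ • (x - y)) = h ^ p * ∫ u, φ u := by
  calc ∫ y, φ (h⁻¹ • (x - y)) = ∫ z, φ (h⁻¹ • z) :=
        integral_sub_left_eq_self (fun z => φ (h⁻¹ • z)) volume x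
    _ = h ^ (Module.finrank ℝ (EuclideanSpace ℝ (Fin p))) • ∫ u, φ u :=
        Measure.integral_comp_inv_smul_of_nonneg volume φ hh.le
    _ = h ^ p * ∫ u, φ u := by
        rw [finrank_euclideanSpace_fin, smul_eq_mul]

/-- density facts -/
lemma density_facts {p : ℕ} (f : EuclideanSpace ℝ (Fin p) → ℝ) (hfc : Continuous f)
    (ν : Measure (EuclideanSpace ℝ (Fin p))) [IsProbabilityMeasure ν]
    (hν : ∀ A, MeasurableSet A → ν A = ENNReal.ofReal (∫ x in A, f x)) :
    (∀ y, 0 ≤ f y) ∧ Integrable f ∧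
      ν = volume.withDensity (fun y => ENNReal.ofReal (f y)) := by
  have hInt : Integrable f := by
    by_contra hcon
    have h1 : ν univ = 1 := measure_univ
    rw [hν univ MeasurableSet.univ, setIntegral_univ, integral_undef hcon] at h1
    simp at h1
  have hTot : (1:ℝ) = ∫ y, f y := by
    have h1 : ν univ = 1 := measure_univ
    rw [hν univ MeasurableSet.univ, setIntegral_univ] at h1
    exact (ENNReal.ofReal_eq_one.mp h1).symm
  have hnn : ∀ y, 0 ≤ f y := by
    intro y₀
    by_contra hy₀
    push_neg at hy₀
    have hopen : IsOpen {y | f y < f y₀ / 2} := isOpen_lt hfc continuous_const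
    have hmem : y₀ ∈ {y | f y < f y₀ / 2} := by simp only [mem_setOf_eq]; linarith
    obtain ⟨r, hr, hball⟩ := Metric.isOpen_iff.mp hopen y₀ hmem
    set b := Metric.ball y₀ r with hbdef
    have hbm : MeasurableSet b := measurableSet_ball
    have hvolb_pos : 0 < volume b := Metric.measure_ball_pos volume y₀ hr
    have hvolb_fin : volume b < ⊤ := measure_ball_lt_top
    have hib : ∫ y in b, f y ≤ (volume b).toReal * (f y₀ / 2) := by
      calc ∫ y in b, f y ≤ ∫ _y in b, f y₀ / 2 :=
            setIntegral_mono_on hInt.integrableOn (integrableOn_const hvolb_fin.ne)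
              hbm (fun y hy => (hball hy).le)
        _ = (volume b).toReal * (f y₀ / 2) := by
            rw [setIntegral_const, smul_eq_mul]; rfl
    have hneg : ∫ y in b, f y < 0 := by
      have h1 : 0 < (volume b).toReal := ENNReal.toReal_pos hvolb_pos.ne' hvolb_fin.ne
      nlinarith
    have hsplit : (∫ y in b, f y) + ∫ y in bᶜ, f y = ∫ y, f y :=
      integral_add_compl hbm hInt
    have hle1' : ∫ y in bᶜ, f y ≤ 1 := by
      by_contra hgt
      push_neg at hgt
      have h2 : (1 : ENNReal) < ν bᶜ := by
        rw [hν bᶜ hbm.compl]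
        exact ENNReal.one_lt_ofReal.mpr hgt
      exact absurd h2 (not_lt.mpr prob_le_one)
    linarith
  refine ⟨hnn, hInt, ?_⟩
  ext A hA
  rw [withDensity_apply _ hA, hν A hA,
    ofReal_integral_eq_lintegral_ofReal hInt.integrableOn
      (Filter.Eventually.of_forall fun y => hnn y)]

set_option maxHeartbeats 1600000 in
/-- under (H.1) and (K), if `f(x) > 0` and `n h^{2η+p} |log h|⁻¹ = O(1)`,
the kernel density estimator satisfies
`|n⁻¹ Σᵢ K_h(x - Xᵢ) - f(x)| = O_P((n hᵖ)^{-1/2} |log h|^{1/2})`, i.e. for every `ε > 0`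
there is `M > 0` with `limsup_n P((n hᵖ)^{1/2}|log h|^{-1/2} |n⁻¹ Σ K_h(x-Xᵢ) - f(x)| > M) ≤ ε`. -/
theorem kernel_density_estimator_rate
    {Ω : Type*} [MeasurableSpace Ω] (μ : Measure Ω) [IsProbabilityMeasure μ]
    (p : ℕ) (X : ℕ → Ω → EuclideanSpace ℝ (Fin p)) (hXm : ∀ i, Measurable (X i))
    (hindep : iIndepFun X μ)
    (hident : ∀ i, IdentDistrib (X i) (X 0) μ μ)
    (f : EuclideanSpace ℝ (Fin p) → ℝ)
    (hf : ∀ A : Set (EuclideanSpace ℝ (Fin p)), MeasurableSet A →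
      μ {ω | X 0 ω ∈ A} = ENNReal.ofReal (∫ x' in A, f x'))
    (c η : ℝ) (hc : 0 < c) (hη : 0 < η ∧ η ≤ 1)
    (hHolder_f : ∀ x₁ x₂, |f x₁ - f x₂| ≤ c * ‖x₁ - x₂‖ ^ η)
    (K : EuclideanSpace ℝ (Fin p) → ℝ) (hK0 : ∀ u, 0 ≤ K u)
    (hKb : ∃ B, ∀ u, K u ≤ B) (hKd : ∫ u, K u = 1)
    (hKn : Integrable (fun u => ‖u‖ * K u))
    (h : ℕ → ℝ) (hh : ∀ n, 0 < h n) (hh0 : Tendsto h atTop (nhds 0))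
    (x : EuclideanSpace ℝ (Fin p)) (hfx : 0 < f x)
    (hband : ∃ C, ∀ᶠ n : ℕ in atTop,
      (n : ℝ) * h n ^ (2 * η + (p : ℝ)) / |Real.log (h n)| ≤ C) :
    ∀ ε > 0, ∃ M > 0,
      limsup (fun n : ℕ =>
        (μ {ω | M < Real.sqrt ((n : ℝ) * h n ^ p / |Real.log (h n)|) *
          |(1 / (n : ℝ)) * ∑ i : Fin n, K ((h n)⁻¹ • (x - X i ω)) / h n ^ p - f x|}).toReal)
        atTop ≤ ε := by
  obtain ⟨hη0, hη1⟩ := hη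
  obtain ⟨B₀, hKB₀⟩ := hKb
  set B : ℝ := max B₀ 1 with hBdef
  have hB1 : (1:ℝ) ≤ B := le_max_right _ _
  have hB0 : (0:ℝ) < B := lt_of_lt_of_le one_pos hB1
  have hKB : ∀ u, K u ≤ B := fun u => (hKB₀ u).trans (le_max_left _ _)
  -- continuity of f
  have hfc : Continuous f := by
    rw [continuous_iff_continuousAt]
    intro a
    rw [ContinuousAt, tendsto_iff_dist_tendsto_zero]
    apply squeeze_zero' (Filter.Eventually.of_forall fun y => dist_nonneg)
      (g := fun y => c * ‖y - a‖ ^ η)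
      (Filter.Eventually.of_forall fun y => by
        rw [Real.dist_eq]; exact hHolder_f y a)
    have h1 : Tendsto (fun y : EuclideanSpace ℝ (Fin p) => ‖y - a‖) (nhds a) (nhds 0) := by
      have hcont : Continuous fun y : EuclideanSpace ℝ (Fin p) => ‖y - a‖ :=
        (continuous_id.sub continuous_const).norm
      simpa using hcont.tendsto a
    have h2 : ContinuousAt (fun t : ℝ => t ^ η) 0 :=
      Real.continuousAt_rpow_const 0 η (Or.inr hη0.le)
    have h3 : Tendsto (fun y => ‖y - a‖ ^ η) (nhds a) (nhds 0) := by
      have := h2.tendsto.comp h1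
      simpa [Function.comp_def, Real.zero_rpow hη0.ne'] using this
    simpa using h3.const_mul c
  -- law of X 0
  set ν : Measure (EuclideanSpace ℝ (Fin p)) := Measure.map (X 0) μ with hνdef
  have : IsProbabilityMeasure ν := Measure.isProbabilityMeasure_map (hXm 0).aemeasurable
  have hν : ∀ A, MeasurableSet A → ν A = ENNReal.ofReal (∫ x' in A, f x') := by
    intro A hA
    rw [hνdef, Measure.map_apply (hXm 0) hA]
    exact hf A hA
  obtain ⟨hf0, hfint, hνd⟩ := density_facts f hfc ν hν
  -- measurable modification of K
  have hKint : Integrable K := by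
    by_contra hcon
    rw [integral_undef hcon] at hKd
    exact one_ne_zero hKd.symm
  obtain ⟨K₁, hK₁sm, hK₁ae⟩ := hKint.aestronglyMeasurable
  set K' : EuclideanSpace ℝ (Fin p) → ℝ := fun u => max 0 (min (K₁ u) B) with hK'def
  have hK'm : Measurable K' :=
    measurable_const.max ((hK₁sm.measurable).min measurable_const)
  have hKae : ∀ᵐ u, K u = K' u := by
    filter_upwards [hK₁ae] with u hu
    rw [hK'def]
    simp only [← hu]
    rw [min_eq_left (hKB u), max_eq_right (hK0 u)]
  have hK'0 : ∀ u, 0 ≤ K' u := fun u => le_max_left _ _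
  have hK'B : ∀ u, K' u ≤ B := fun u => max_le hB0.le (min_le_right _ _)
  have hK'int : Integrable K' := hKint.congr hKae
  have hK'd : ∫ u, K' u = 1 := by rw [← integral_congr_ae hKae]; exact hKd
  have hKn' : Integrable (fun u => ‖u‖ * K' u) :=
    hKn.congr (hKae.mono fun u hu => by dsimp only; rw [hu])
  set I₁ : ℝ := ∫ u, ‖u‖ * K' u with hI₁def
  have hI₁eq : ∫ u, ‖u‖ * K u = I₁ :=
    integral_congr_ae (hKae.mono fun u hu => by dsimp only; rw [hu])
  have hI₁0 : 0 ≤ I₁ :=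
    integral_nonneg fun u => mul_nonneg (norm_nonneg u) (hK'0 u)
  -- null set where K ≠ K'
  obtain ⟨N₀, hN₀sub, hN₀meas, hN₀null⟩ :=
    exists_measurable_superset_of_null (ae_iff.mp hKae)
  -- rpow helper
  have hpow : ∀ t : ℝ, 0 ≤ t → t ^ η ≤ 1 + t := fun t ht => rpow_le_one_add ht hη0 hη1
  -- kernel-smoothed functions
  set gfun : ℕ → EuclideanSpace ℝ (Fin p) → ℝ :=
    fun n y => K' ((h n)⁻¹ • (x - y)) / h n ^ p with hgfun
  have hgm : ∀ n, Measurable (gfun n) := fun n =>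
    (hK'm.comp ((measurable_const.sub measurable_id).const_smul ((h n)⁻¹))).div_const _
  have hg0 : ∀ n y, 0 ≤ gfun n y := fun n y => div_nonneg (hK'0 _) (pow_nonneg (hh n).le p)
  have hgB : ∀ n y, gfun n y ≤ B / h n ^ p := fun n y =>
    (div_le_div_iff_of_pos_right (pow_pos (hh n) p)).mpr (hK'B _)
  set Eg : ℕ → ℝ := fun n => ∫ u, K' u * f (x - h n • u) with hEgdef
  set Y : ℕ → ℕ → Ω → ℝ := fun n i => fun ω => gfun n (X i ω) with hYdef
  have hYm : ∀ n i, Measurable (Y n i) := fun n i => (hgm n).comp (hXm i)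
  have hYmem : ∀ n i, MemLp (Y n i) 2 μ := by
    intro n i
    refine (memLp_top_of_bound ((hYm n i).aestronglyMeasurable) (B / h n ^ p)
      (Filter.Eventually.of_forall fun ω => ?_)).mono_exponent le_top
    rw [Real.norm_eq_abs, abs_of_nonneg (hg0 n (X i ω))]
    exact hgB n (X i ω)
  have hYint : ∀ n i, Integrable (Y n i) μ := fun n i => (hYmem n i).integrable one_le_two
  -- distance computation
  have hdist : ∀ n (u : EuclideanSpace ℝ (Fin p)), ‖x - h n • u - x‖ = h n * ‖u‖ := by
    intro n u
    have : x - h n • u - x = -(h n • u) := by abel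
    rw [this, norm_neg, norm_smul, Real.norm_eq_abs, abs_of_pos (hh n)]
  -- integrability of the substituted integrand
  have hφint : ∀ n, Integrable (fun u => K' u * f (x - h n • u)) := by
    intro n
    have hdom : Integrable (fun u => (f x + c) * K' u + (c * h n) * (‖u‖ * K' u)) :=
      (hK'int.const_mul _).add (hKn'.const_mul _)
    refine hdom.mono' ?_ (Filter.Eventually.of_forall fun u => ?_)
    · exact (hK'm.mul ((hfc.comp
        (continuous_const.sub (continuous_id.const_smul (h n)))).measurable)).aestronglyMeasurable
    · have h3 := hHolder_f (x - h n • u) x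
      rw [hdist n u] at h3
      have h5 : (h n * ‖u‖) ^ η ≤ 1 + h n * ‖u‖ :=
        hpow _ (mul_nonneg (hh n).le (norm_nonneg u))
      have h1 : f (x - h n • u) ≤ f x + c * (1 + h n * ‖u‖) := by
        have h2 : f (x - h n • u) - f x ≤ |f (x - h n • u) - f x| := le_abs_self _
        nlinarith [mul_le_mul_of_nonneg_left h5 hc.le]
      have h0 : 0 ≤ K' u * f (x - h n • u) := mul_nonneg (hK'0 u) (hf0 _)
      rw [Real.norm_eq_abs, abs_of_nonneg h0]
      calc K' u * f (x - h n • u) ≤ K' u * (f x + c * (1 + h n * ‖u‖)) :=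
            mul_le_mul_of_nonneg_left h1 (hK'0 u)
        _ = (f x + c) * K' u + (c * h n) * (‖u‖ * K' u) := by ring
  -- mean computation
  have hYmean : ∀ n, (∫ ω, Y n 0 ω ∂μ) = Eg n := by
    intro n
    have hstep1 : (∫ ω, Y n 0 ω ∂μ) = ∫ y, gfun n y ∂ν := by
      rw [hνdef]
      exact (integral_map (hXm 0).aemeasurable (hgm n).aestronglyMeasurable).symm
    have hstep2 : (∫ y, gfun n y ∂ν) = ∫ y, ((f y).toNNReal : ℝ) • gfun n y := by
      rw [hνd]
      exact integral_withDensity_eq_integral_smul (hfc.measurable.real_toNNReal) (gfun n)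
    have hstep3 : (fun y => ((f y).toNNReal : ℝ) • gfun n y)
        = fun y => (fun z => K' ((h n)⁻¹ • z) * f (x - h n • ((h n)⁻¹ • z))) (x - y) / h n ^ p := by
      funext y
      have hsm : h n • (h n)⁻¹ • (x - y) = x - y := smul_inv_smul₀ (hh n).ne' _
      simp only [hgfun, smul_eq_mul, Real.coe_toNNReal _ (hf0 y)]
      rw [hsm, sub_sub_cancel]
      ring
    have hstep4 : (∫ y, (fun z => K' ((h n)⁻¹ • z) * f (x - h n • ((h n)⁻¹ • z))) (x - y) / h n ^ p)
        = (∫ y, (fun u => K' u * f (x - h n • u)) ((h n)⁻¹ • (x - y))) / h n ^ p :=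
      integral_div _ _
    have hstep5 : (∫ y, (fun u => K' u * f (x - h n • u)) ((h n)⁻¹ • (x - y)))
        = h n ^ p * ∫ u, K' u * f (x - h n • u) :=
      change_var (fun u => K' u * f (x - h n • u)) x (hh n)
    rw [hstep1, hstep2, hstep3, hstep4, hstep5, hEgdef]
    exact mul_div_cancel_left₀ _ (pow_ne_zero p (hh n).ne')
  have hEg0 : ∀ n, 0 ≤ Eg n := fun n =>
    integral_nonneg fun u => mul_nonneg (hK'0 u) (hf0 _)
  -- bias bound
  have hbias : ∀ n, |Eg n - f x| ≤ c * h n ^ η * (1 + I₁) := by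
    intro n
    have hsub : Eg n - f x = ∫ u, K' u * (f (x - h n • u) - f x) := by
      have h1 : (∫ u, K' u * (f (x - h n • u) - f x))
          = (∫ u, K' u * f (x - h n • u)) - ∫ u, K' u * f x := by
        rw [← integral_sub (hφint n) (hK'int.mul_const _)]
        simp [mul_sub]
      have h2 : (∫ u, K' u * f x) = f x := by
        rw [integral_mul_const, hK'd, one_mul]
      rw [h1, h2, hEgdef]
    rw [hsub]
    have hb : ∀ u : EuclideanSpace ℝ (Fin p), ‖K' u * (f (x - h n • u) - f x)‖
        ≤ c * h n ^ η * (K' u + ‖u‖ * K' u) := by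
      intro u
      rw [Real.norm_eq_abs, abs_mul, abs_of_nonneg (hK'0 u)]
      have h3 := hHolder_f (x - h n • u) x
      rw [hdist n u] at h3
      have h5 : (h n * ‖u‖) ^ η = h n ^ η * ‖u‖ ^ η := Real.mul_rpow (hh n).le (norm_nonneg u)
      have h6 : ‖u‖ ^ η ≤ 1 + ‖u‖ := hpow _ (norm_nonneg u)
      have hrnn : (0:ℝ) ≤ h n ^ η := Real.rpow_nonneg (hh n).le η
      have h7 : |f (x - h n • u) - f x| ≤ c * (h n ^ η * (1 + ‖u‖)) := by
        rw [h5] at h3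
        nlinarith [mul_le_mul_of_nonneg_left h6 (mul_nonneg hc.le hrnn)]
      calc K' u * |f (x - h n • u) - f x| ≤ K' u * (c * (h n ^ η * (1 + ‖u‖))) :=
            mul_le_mul_of_nonneg_left h7 (hK'0 u)
        _ = c * h n ^ η * (K' u + ‖u‖ * K' u) := by ring
    have hint2 : Integrable (fun u => c * h n ^ η * (K' u + ‖u‖ * K' u)) :=
      (hK'int.add hKn').const_mul _
    have hbound := norm_integral_le_of_norm_le hint2 (Filter.Eventually.of_forall hb)
    rw [Real.norm_eq_abs] at hbound
    calc |∫ u, K' u * (f (x - h n • u) - f x)|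
        ≤ ∫ u, c * h n ^ η * (K' u + ‖u‖ * K' u) := hbound
      _ = c * h n ^ η * (1 + I₁) := by
          rw [integral_const_mul, integral_add hK'int hKn', hK'd, hI₁def]
  have hEgD : ∀ n, h n ≤ 1 → Eg n ≤ f x + c * (1 + I₁) := by
    intro n hn1
    have h1 := hbias n
    have h2 : h n ^ η ≤ 1 := Real.rpow_le_one (hh n).le hn1 hη0.le
    have h3 : Eg n - f x ≤ c * h n ^ η * (1 + I₁) := (le_abs_self _).trans h1
    have h4 : c * h n ^ η * (1 + I₁) ≤ c * (1 + I₁) := by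
      have h5 := mul_le_mul_of_nonneg_left h2
        (mul_nonneg hc.le (by linarith : (0:ℝ) ≤ 1 + I₁))
      nlinarith [h5]
    linarith
  -- variance bound for a single term
  have hYvar : ∀ n, variance (Y n 0) μ ≤ B / h n ^ p * Eg n := by
    intro n
    have h1 : variance (Y n 0) μ ≤ μ[(Y n 0) ^ 2] :=
      variance_le_expectation_sq (hYm n 0).aestronglyMeasurable
    have h2 : μ[(Y n 0) ^ 2] ≤ ∫ ω, (B / h n ^ p) * Y n 0 ω ∂μ := by
      apply integral_mono ((hYmem n 0).integrable_sq) ((hYint n 0).const_mul _)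
      intro ω
      simp only [Pi.pow_apply]
      rw [sq]
      exact mul_le_mul_of_nonneg_right (hgB n (X 0 ω)) (hg0 n (X 0 ω))
    have h3 : (∫ ω, (B / h n ^ p) * Y n 0 ω ∂μ) = B / h n ^ p * Eg n := by
      rw [integral_const_mul, hYmean n]
    linarith
  have hYid : ∀ n i, IdentDistrib (Y n i) (Y n 0) μ μ := fun n i => (hident i).comp (hgm n)
  -- the averaged estimator (with kernel K')
  set S : ℕ → Ω → ℝ := fun n => ∑ i ∈ Finset.range n, Y n i with hSdef
  set T : ℕ → Ω → ℝ := fun n => (1 / (n:ℝ)) • S n with hTdef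
  have hTapply : ∀ n ω, T n ω = (1 / (n:ℝ)) * ∑ i ∈ Finset.range n, Y n i ω := by
    intro n ω
    simp [hTdef, hSdef, Finset.sum_apply]
  have hTmem : ∀ n, MemLp (T n) 2 μ := fun n =>
    (memLp_finset_sum' _ fun i _ => hYmem n i).const_smul _
  have hTmean : ∀ n, 1 ≤ n → μ[T n] = Eg n := by
    intro n hn
    have hn0 : ((n:ℝ)) ≠ 0 := Nat.cast_ne_zero.mpr (by omega)
    have h1 : μ[T n] = (1 / (n:ℝ)) * μ[S n] := by
      simp only [hTdef, Pi.smul_apply, smul_eq_mul]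
      rw [integral_const_mul]
    have h2 : μ[S n] = ∑ i ∈ Finset.range n, μ[Y n i] := by
      simp only [hSdef]
      have : (∫ ω, (∑ i ∈ Finset.range n, Y n i) ω ∂μ)
          = ∫ ω, ∑ i ∈ Finset.range n, Y n i ω ∂μ := by
        congr 1; funext ω; simp [Finset.sum_apply]
      rw [this, integral_finset_sum _ (fun i _ => hYint n i)]
    have h3 : ∑ i ∈ Finset.range n, μ[Y n i] = (n:ℝ) * μ[Y n 0] := by
      rw [Finset.sum_congr rfl (fun i _ => (hYid n i).integral_eq)]
      rw [Finset.sum_const, Finset.card_range, nsmul_eq_mul]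
    rw [h1, h2, h3, hYmean n]
    field_simp
  have hTvar : ∀ n, 1 ≤ n → variance (T n) μ ≤ B / h n ^ p * Eg n / n := by
    intro n hn
    have hn0 : (0:ℝ) < n := by
      have : (1:ℝ) ≤ (n:ℝ) := by exact_mod_cast hn
      linarith
    have h1 : variance (T n) μ = (1 / (n:ℝ))^2 * variance (S n) μ := by
      simp only [hTdef]
      exact variance_smul _ _ _
    have hindep' : iIndepFun (Y n) μ :=
      hindep.comp (fun _ => gfun n) (fun _ => hgm n)
    have h2 : variance (S n) μ = ∑ i ∈ Finset.range n, variance (Y n i) μ := by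
      simp only [hSdef]
      exact IndepFun.variance_sum (fun i _ => hYmem n i)
        (fun i _ j _ hij => hindep'.indepFun hij)
    have h3 : ∑ i ∈ Finset.range n, variance (Y n i) μ = (n:ℝ) * variance (Y n 0) μ := by
      rw [Finset.sum_congr rfl (fun i _ => (hYid n i).variance_eq)]
      rw [Finset.sum_const, Finset.card_range, nsmul_eq_mul]
    have h4 : variance (T n) μ = variance (Y n 0) μ / n := by
      rw [h1, h2, h3]
      field_simp
    rw [h4]
    exact (div_le_div_iff_of_pos_right hn0).mpr (hYvar n)
  -- null sets where K and K' differ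
  have hW : ∀ n i, μ (X i ⁻¹' ((fun y => (h n)⁻¹ • (x - y)) ⁻¹' N₀)) = 0 := by
    intro n i
    have hcont : Continuous fun y : EuclideanSpace ℝ (Fin p) => (h n)⁻¹ • (x - y) := by
      fun_prop
    have hSm : MeasurableSet ((fun y : EuclideanSpace ℝ (Fin p) => (h n)⁻¹ • (x - y)) ⁻¹' N₀) :=
      hcont.measurable hN₀meas
    have hvol : volume ((fun y : EuclideanSpace ℝ (Fin p) => (h n)⁻¹ • (x - y)) ⁻¹' N₀) = 0 := by
      have h1 : volume (((h n)⁻¹ • ·) ⁻¹' N₀) = 0 := by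
        rw [Measure.addHaar_preimage_smul volume (inv_ne_zero (hh n).ne') N₀, hN₀null, mul_zero]
      have h2 : (fun y : EuclideanSpace ℝ (Fin p) => (h n)⁻¹ • (x - y)) ⁻¹' N₀
          = (fun y : EuclideanSpace ℝ (Fin p) => -y) ⁻¹'
            ((fun y : EuclideanSpace ℝ (Fin p) => x + y) ⁻¹' (((h n)⁻¹ • ·) ⁻¹' N₀)) := by
        ext y
        simp [sub_eq_add_neg]
      rw [h2, Measure.measure_preimage_neg, measure_preimage_add, h1]
    have h4 := (hident i).measure_mem_eq hSm
    rw [h4]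
    have h5 := hf _ hSm
    calc μ (X 0 ⁻¹' ((fun y => (h n)⁻¹ • (x - y)) ⁻¹' N₀))
        = ENNReal.ofReal (∫ y in ((fun y => (h n)⁻¹ • (x - y)) ⁻¹' N₀), f y) := h5
      _ = 0 := by
          rw [show (∫ y in ((fun y => (h n)⁻¹ • (x - y)) ⁻¹' N₀), f y) = 0 by
            rw [Measure.restrict_eq_zero.mpr hvol, integral_zero_measure]]
          exact ENNReal.ofReal_zero
  -- constants for the final bound
  intro ε hε
  obtain ⟨C₀, hC₀⟩ := hband
  set C := max C₀ 0 with hCdef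
  have hC0' : (0:ℝ) ≤ C := le_max_right _ _
  have hC : ∀ᶠ n : ℕ in atTop, (n:ℝ) * h n ^ (2*η + (p:ℝ)) / |Real.log (h n)| ≤ C :=
    hC₀.mono fun n hn => hn.trans (le_max_left _ _)
  set D := f x + c * (1 + I₁) with hDdef
  have hD0 : 0 < D := add_pos hfx (mul_pos hc (by linarith))
  set M := 2 * (c * (1 + I₁) * Real.sqrt C + 1) with hMdef
  have hM0 : 0 < M := by
    have h1 := Real.sqrt_nonneg C
    have h2 : 0 ≤ c * (1 + I₁) := mul_nonneg hc.le (by linarith)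
    nlinarith
  refine ⟨M, hM0, ?_⟩
  have hev : ∀ᶠ n : ℕ in atTop,
      (μ {ω | M < Real.sqrt ((n : ℝ) * h n ^ p / |Real.log (h n)|) *
        |(1 / (n : ℝ)) * ∑ i : Fin n, K ((h n)⁻¹ • (x - X i ω)) / h n ^ p - f x|}).toReal
      ≤ 4 * B * D / (M^2 * |Real.log (h n)|) := by
    have he1 : ∀ᶠ n : ℕ in atTop, 1 ≤ n := eventually_ge_atTop 1
    have he2 : ∀ᶠ n : ℕ in atTop, h n < Real.exp (-1) :=
      hh0.eventually_lt_const (Real.exp_pos (-1))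
    filter_upwards [he1, he2, hC] with n hn1 hn2 hnC
    have hhp : (0:ℝ) < h n ^ p := pow_pos (hh n) p
    have hn0 : (0:ℝ) < n := by
      have : (1:ℝ) ≤ (n:ℝ) := by exact_mod_cast hn1
      linarith
    have hlogneg : Real.log (h n) ≤ -1 := by
      have := Real.log_le_log (hh n) hn2.le
      rwa [Real.log_exp] at this
    have hL1 : 1 ≤ |Real.log (h n)| := by
      rw [abs_of_neg (by linarith : Real.log (h n) < 0)]
      linarith
    have hL0 : (0:ℝ) < |Real.log (h n)| := lt_of_lt_of_le one_pos hL1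
    have hh1 : h n ≤ 1 := by
      have h1 : Real.exp (-1) ≤ Real.exp 0 := Real.exp_le_exp.mpr (by norm_num)
      rw [Real.exp_zero] at h1
      linarith
    set a := Real.sqrt ((n:ℝ) * h n ^ p / |Real.log (h n)|) with hadef
    have hq0 : 0 < (n:ℝ) * h n ^ p / |Real.log (h n)| := div_pos (mul_pos hn0 hhp) hL0
    have ha0 : 0 < a := Real.sqrt_pos.mpr hq0
    have hbias2 : a * |Eg n - f x| ≤ M / 2 - 1 := by
      have h1 : a * |Eg n - f x| ≤ a * (c * h n ^ η * (1 + I₁)) :=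
        mul_le_mul_of_nonneg_left (hbias n) (Real.sqrt_nonneg _)
      have h2 : a * h n ^ η
          = Real.sqrt ((n:ℝ) * h n ^ (2*η + (p:ℝ)) / |Real.log (h n)|) := by
        rw [hadef, ← Real.sqrt_sq (Real.rpow_nonneg (hh n).le η), ← Real.sqrt_mul hq0.le]
        congr 1
        have h3 : h n ^ (2*η + (p:ℝ)) = (h n ^ η)^2 * h n ^ p := by
          rw [Real.rpow_add (hh n), show (2*η) = η + η by ring, Real.rpow_add (hh n),
            Real.rpow_natCast]
          ring
        rw [h3]
        ring
      have h4 : Real.sqrt ((n:ℝ) * h n ^ (2*η + (p:ℝ)) / |Real.log (h n)|) ≤ Real.sqrt C :=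
        Real.sqrt_le_sqrt hnC
      have h5 : 0 ≤ c * (1 + I₁) := mul_nonneg hc.le (by linarith)
      calc a * |Eg n - f x| ≤ a * (c * h n ^ η * (1 + I₁)) := h1
        _ = c * (1 + I₁) * (a * h n ^ η) := by ring
        _ ≤ c * (1 + I₁) * Real.sqrt C := by
            rw [h2]
            exact mul_le_mul_of_nonneg_left h4 h5
        _ = M / 2 - 1 := by rw [hMdef]; ring
    set t := M / (2 * a) with htdef
    have ht0 : 0 < t := div_pos hM0 (by linarith)
    have hsub : {ω | M < a *
        |(1 / (n : ℝ)) * ∑ i : Fin n, K ((h n)⁻¹ • (x - X i ω)) / h n ^ p - f x|}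
        ⊆ {ω | t ≤ |T n ω - μ[T n]|}
          ∪ ⋃ i ∈ Finset.range n, X i ⁻¹' ((fun y => (h n)⁻¹ • (x - y)) ⁻¹' N₀) := by
      intro ω hω
      by_cases hw : ω ∈ ⋃ i ∈ Finset.range n, X i ⁻¹' ((fun y => (h n)⁻¹ • (x - y)) ⁻¹' N₀)
      · exact Or.inr hw
      · left
        simp only [mem_iUnion, Finset.mem_range, mem_preimage, not_exists] at hw
        have hTK : (1 / (n:ℝ)) * ∑ i : Fin n, K ((h n)⁻¹ • (x - X i ω)) / h n ^ p = T n ω := by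
          rw [hTapply n ω,
            ← Fin.sum_univ_eq_sum_range (fun i => Y n i ω) n]
          congr 1
          apply Finset.sum_congr rfl
          intro i _
          have hmemN : X (i:ℕ) ω ∉ (fun y => (h n)⁻¹ • (x - y)) ⁻¹' N₀ := hw i i.isLt
          have hkk : K ((h n)⁻¹ • (x - X i ω)) = K' ((h n)⁻¹ • (x - X i ω)) := by
            by_contra hne
            exact hmemN (hN₀sub hne)
          simp only [hYdef, hgfun]
          rw [hkk]
        rw [mem_setOf_eq, hTK] at hω
        have hm := hTmean n hn1
        have htri : |T n ω - f x| ≤ |T n ω - Eg n| + |Eg n - f x| := abs_sub_le _ _ _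
        have h5 : a * |T n ω - f x| ≤ a * |T n ω - Eg n| + a * |Eg n - f x| := by
          have := mul_le_mul_of_nonneg_left htri ha0.le
          linarith [this]
        have h6 : M / 2 < a * |T n ω - Eg n| := by linarith [hω.trans_le h5]
        show t ≤ |T n ω - μ[T n]|
        rw [hm, htdef, div_le_iff₀ (by linarith : (0:ℝ) < 2 * a)]
        nlinarith
    have hWnull : μ (⋃ i ∈ Finset.range n,
        X i ⁻¹' ((fun y => (h n)⁻¹ • (x - y)) ⁻¹' N₀)) = 0 :=
      (measure_biUnion_null_iff (Finset.range n).countable_toSet).mpr fun i _ => hW n i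
    have hcheb := meas_ge_le_variance_div_sq (hTmem n) ht0
    have hmb : μ {ω | M < a *
        |(1 / (n : ℝ)) * ∑ i : Fin n, K ((h n)⁻¹ • (x - X i ω)) / h n ^ p - f x|}
        ≤ ENNReal.ofReal (variance (T n) μ / t^2) := by
      calc μ {ω | M < a *
          |(1 / (n : ℝ)) * ∑ i : Fin n, K ((h n)⁻¹ • (x - X i ω)) / h n ^ p - f x|}
          ≤ μ ({ω | t ≤ |T n ω - μ[T n]|}
            ∪ ⋃ i ∈ Finset.range n, X i ⁻¹' ((fun y => (h n)⁻¹ • (x - y)) ⁻¹' N₀)) :=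
            measure_mono hsub
        _ ≤ μ {ω | t ≤ |T n ω - μ[T n]|}
            + μ (⋃ i ∈ Finset.range n, X i ⁻¹' ((fun y => (h n)⁻¹ • (x - y)) ⁻¹' N₀)) :=
            measure_union_le _ _
        _ = μ {ω | t ≤ |T n ω - μ[T n]|} := by rw [hWnull, add_zero]
        _ ≤ ENNReal.ofReal (variance (T n) μ / t^2) := hcheb
    have hEgle : Eg n ≤ D := hEgD n hh1
    have hvineq : variance (T n) μ ≤ B * D / (h n ^ p * n) := by
      have h8 := hTvar n hn1
      have h9 : B / h n ^ p * Eg n / n ≤ B * D / (h n ^ p * n) := by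
        rw [div_mul_eq_mul_div, div_div]
        exact (div_le_div_iff_of_pos_right (mul_pos hhp hn0)).mpr
          (mul_le_mul_of_nonneg_left hEgle hB0.le)
      exact h8.trans h9
    have ht2 : t^2 = M^2 / (4 * a^2) := by
      rw [htdef]
      field_simp
      ring
    have ha2 : a^2 = (n:ℝ) * h n ^ p / |Real.log (h n)| := Real.sq_sqrt hq0.le
    have hreal : variance (T n) μ / t^2 ≤ 4 * B * D / (M^2 * |Real.log (h n)|) := by
      have htp : (0:ℝ) < t^2 := pow_pos ht0 2
      calc variance (T n) μ / t^2 ≤ (B * D / (h n ^ p * n)) / t^2 :=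
            (div_le_div_iff_of_pos_right htp).mpr hvineq
        _ = 4 * B * D / (M^2 * |Real.log (h n)|) := by
            rw [ht2, ha2]
            field_simp
    have h10 := ENNReal.toReal_mono (ENNReal.ofReal_ne_top) hmb
    rw [ENNReal.toReal_ofReal (div_nonneg (variance_nonneg _ _) (sq_nonneg t))] at h10
    exact h10.trans hreal
  -- conclusion
  have hlogtop : Tendsto (fun n => |Real.log (h n)|) atTop atTop := by
    have h1 : Tendsto h atTop (nhdsWithin 0 (Set.Ioi 0)) :=
      tendsto_nhdsWithin_iff.mpr ⟨hh0, Filter.Eventually.of_forall fun n => hh n⟩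
    exact tendsto_abs_atBot_atTop.comp (Real.tendsto_log_nhdsGT_zero.comp h1)
  have hr0 : Tendsto (fun n : ℕ => 4 * B * D / (M^2 * |Real.log (h n)|)) atTop (nhds 0) :=
    Tendsto.div_atTop tendsto_const_nhds (hlogtop.const_mul_atTop (by positivity : (0:ℝ) < M^2))
  have hT0 : Tendsto (fun n : ℕ =>
      (μ {ω | M < Real.sqrt ((n : ℝ) * h n ^ p / |Real.log (h n)|) *
        |(1 / (n : ℝ)) * ∑ i : Fin n, K ((h n)⁻¹ • (x - X i ω)) / h n ^ p - f x|}).toReal)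
      atTop (nhds 0) :=
    squeeze_zero' (Filter.Eventually.of_forall fun n => ENNReal.toReal_nonneg) hev hr0
  rw [hT0.limsup_eq]
  linarith
end

section
/- Let (Y,C) be random variables that are conditionally independent given X=x, with T=min(Y,C), δ=1{Y≤C}, H^u(t|x)=P(T≤t,δ=1|X=x), and suppose F(·|x)=P(Y≤·|X=x) is continuous on (−∞,τ_c(x)] and G(·|x)=P(C≤·|X=x) is continuous on (−∞,τ_c(x)) (so that P(Y=C|X=x)=0). Then H^u(·|x) is continuous at τ_c(x), i.e. H^u(τ_c(x)|x)=H^u(τ_c(x)⁻|x), even though H(·|x)=P(T≤·|X=x) has a jump at τ_c(x) when G(τ_c(x)|x)−G(τ_c(x)⁻|x)>0. -/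
open MeasureTheory ProbabilityTheory Set Function

/-- in the censored model (at a fixed covariate value `x`, so that the
conditional independence of `Y` and `C` given `X = x` becomes independence under the
conditional law), with `T = min(Y,C)`, `δ = 1{Y ≤ C}`, if the distribution function of `Y`
is continuous on `(-∞, τ_c]` and that of `C` is continuous on `(-∞, τ_c)`, where `τ_c` is
the right endpoint of the support of the censoring distribution, then the uncensored
sub-distribution `H^u(t) = P(T ≤ t, δ = 1)` is continuous at `τ_c`:
`H^u(τ_c) = H^u(τ_c⁻)`. -/
theorem uncensored_subdistribution_continuous_at_endpoint
    {Ω : Type*} [MeasurableSpace Ω] (μ : Measure Ω) [IsProbabilityMeasure μ]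
    (Y C : Ω → ℝ) (hY : Measurable Y) (hC : Measurable C)
    (hindep : IndepFun Y C μ)
    (τc : ℝ)
    (hGsupp1 : μ {ω | C ω ≤ τc} = 1)
    (hGsupp2 : ∀ t < τc, μ {ω | C ω ≤ t} < 1)
    (hFcont : ContinuousOn (fun t => (μ {ω | Y ω ≤ t}).toReal) (Iic τc))
    (hGcont : ContinuousOn (fun t => (μ {ω | C ω ≤ t}).toReal) (Iio τc)) :
    (μ {ω | min (Y ω) (C ω) ≤ τc ∧ Y ω ≤ C ω}).toReal =
      leftLim (fun t => (μ {ω | min (Y ω) (C ω) ≤ t ∧ Y ω ≤ C ω}).toReal) τc := by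

  classical
  set A : ℝ → Set Ω := fun t => {ω | min (Y ω) (C ω) ≤ t ∧ Y ω ≤ C ω} with hA
  set f : ℝ → ℝ := fun t => (μ (A t)).toReal with hf
  set F : ℝ → ℝ := fun t => (μ {ω | Y ω ≤ t}).toReal with hFdef
  have hfin : ∀ s : Set Ω, μ s ≠ ⊤ := fun s => (measure_lt_top μ s).ne
  -- monotonicity in t
  have hmono : ∀ s t : ℝ, s ≤ t → f s ≤ f t := by
    intro s t hst
    apply ENNReal.toReal_mono (hfin _)
    exact measure_mono (fun ω hω => ⟨hω.1.trans hst, hω.2⟩)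
  -- key inequality
  have hkey : ∀ t ≤ τc, f τc - f t ≤ F τc - F t := by
    intro t ht
    have hsub : A τc ⊆ A t ∪ ({ω | Y ω ≤ τc} \ {ω | Y ω ≤ t}) := by
      intro ω hω
      rcases hω with ⟨hmin, hYC⟩
      have hYτ : Y ω ≤ τc := (min_eq_left hYC ▸ hmin)
      by_cases h : Y ω ≤ t
      · exact Or.inl ⟨le_trans (min_le_left _ _) h, hYC⟩
      · exact Or.inr ⟨hYτ, h⟩
    have h1 : μ (A τc) ≤ μ (A t) + μ ({ω | Y ω ≤ τc} \ {ω | Y ω ≤ t}) :=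
      le_trans (measure_mono hsub) (measure_union_le _ _)
    have hBsub : {ω | Y ω ≤ t} ⊆ {ω | Y ω ≤ τc} := fun ω hω => le_trans hω ht
    have hdiff : μ ({ω | Y ω ≤ τc} \ {ω | Y ω ≤ t}) = μ {ω | Y ω ≤ τc} - μ {ω | Y ω ≤ t} :=
      measure_diff hBsub (measurableSet_le hY measurable_const).nullMeasurableSet (hfin _)
    have h2 : (μ (A τc)).toReal ≤ (μ (A t)).toReal +
        (μ ({ω | Y ω ≤ τc} \ {ω | Y ω ≤ t})).toReal := by
      rw [← ENNReal.toReal_add (hfin _) (hfin _)]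
      exact ENNReal.toReal_mono (by simp [hfin, ENNReal.add_ne_top]) h1
    have h3 : (μ ({ω | Y ω ≤ τc} \ {ω | Y ω ≤ t})).toReal = F τc - F t := by
      rw [hdiff, ENNReal.toReal_sub_of_le (measure_mono hBsub) (hfin _)]
    linarith [h2, h3]
  -- F is left-continuous at τc
  have hFt : Filter.Tendsto F (nhdsWithin τc (Iio τc)) (nhds (F τc)) := by
    have := hFcont τc (mem_Iic.mpr le_rfl)
    exact this.tendsto.mono_left (nhdsWithin_mono τc Iio_subset_Iic_self)
  -- squeeze
  have hft : Filter.Tendsto f (nhdsWithin τc (Iio τc)) (nhds (f τc)) := by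
    have hlow : Filter.Tendsto (fun t => f τc - (F τc - F t)) (nhdsWithin τc (Iio τc))
        (nhds (f τc)) := by
      have : Filter.Tendsto (fun t => f τc - (F τc - F t)) (nhdsWithin τc (Iio τc))
          (nhds (f τc - (F τc - F τc))) :=
        (tendsto_const_nhds.sub (tendsto_const_nhds.sub hFt))
      simpa using this
    refine tendsto_of_tendsto_of_tendsto_of_le_of_le' hlow tendsto_const_nhds ?_ ?_
    · filter_upwards [self_mem_nhdsWithin] with t ht
      have := hkey t (le_of_lt ht)
      linarith
    · filter_upwards [self_mem_nhdsWithin] with t ht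
      exact hmono t τc (le_of_lt ht)
  exact (leftLim_eq_of_tendsto hft).symm
end

section
/- Let F:ℝ→ℝ be nondecreasing and right-continuous with lim_{s→−∞}F(s)=0, let t₀∈ℝ be such that F is continuous on (−∞,t₀] and F(t₀)<1, and let μ_F be the Lebesgue–Stieltjes measure associated with F. Then for every t≤t₀, the cumulative hazard Λ(t)=∫_{(−∞,t]} (1−F(s))^{−1} dμ_F(s) satisfies 1−F(t)=exp(−Λ(t)), i.e. ∫_{(−∞,t]} (1−F(s))^{−1} dμ_F(s) = −log(1−F(t)). -/
/-!
Since `F` is continuous on `(-∞, t]`, each sublevel set `{s ≤ t | F s ≤ y}` with `y < F t` is an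
interval `(-∞, a]` with `F a = y`, so `F` pushes `μ_F` restricted to `(-∞, t]` forward to Lebesgue
measure on `(0, F t]`. The hazard integral therefore becomes
`∫₀^{F t} (1 - x)⁻¹ dx = -log (1 - F t)`.
-/

open MeasureTheory Set Filter Topology

section

variable {α β : Type*} [ConditionallyCompleteLinearOrder α] [TopologicalSpace α] [OrderTopology α]
  [DenselyOrdered α] [LinearOrder β] [TopologicalSpace β] [OrderClosedTopology β]

theorem Monotone.exists_preimage_Iic_inter_Iic_eq_Iic {f : α → β} (hf : Monotone f) {t : α}
    {y : β} (hcont : ContinuousOn f (Iic t)) (hy : y < f t)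
    (hne : (f ⁻¹' Iic y ∩ Iic t).Nonempty) :
    ∃ a, f a = y ∧ f ⁻¹' Iic y ∩ Iic t = Iic a := by
  set T := f ⁻¹' Iic y ∩ Iic t
  have hbdd : BddAbove T := ⟨t, inter_subset_right⟩
  have hclosed : IsClosed T := by
    simpa only [T, inter_comm] using hcont.preimage_isClosed_of_isClosed isClosed_Iic isClosed_Iic
  obtain ⟨hfa, hat⟩ : sSup T ∈ T := hclosed.csSup_mem hne hbdd
  obtain ⟨c, hc, hfc⟩ : y ∈ f '' Icc (sSup T) t :=
    intermediate_value_Icc hat (hcont.mono Icc_subset_Iic_self) ⟨hfa, hy.le⟩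
  have hcT : c ≤ sSup T := le_csSup hbdd ⟨hfc.le, hc.2⟩
  refine ⟨sSup T, (le_antisymm hcT hc.1) ▸ hfc, Subset.antisymm (fun s hs => le_csSup hbdd hs) ?_⟩
  exact fun s hs => ⟨(hf hs).trans hfa, hs.trans hat⟩

end

theorem integral_inv_one_sub {a : ℝ} (ha : a < 1) :
    ∫ x in (0 : ℝ)..a, (1 - x)⁻¹ = -Real.log (1 - a) := by
  rw [intervalIntegral.integral_comp_sub_left (fun x => x⁻¹) 1, sub_zero,
    integral_inv (notMem_uIcc_of_lt (by linarith) one_pos), one_div, Real.log_inv]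

namespace StieltjesFunction

variable (F : StieltjesFunction ℝ)

theorem measure_preimage_Iic_inter_Iic (hbot : Tendsto F atBot (𝓝 0)) {t : ℝ}
    (hcont : ContinuousOn F (Iic t)) (y : ℝ) :
    F.measure (F ⁻¹' Iic y ∩ Iic t) = ENNReal.ofReal (min y (F t)) := by
  rcases le_or_gt (F t) y with hy | hy
  · have hT : F ⁻¹' Iic y ∩ Iic t = Iic t := inter_eq_right.mpr fun s hs => (F.mono hs).trans hy
    rw [hT, F.measure_Iic hbot, sub_zero, min_eq_right hy]
  rcases (F ⁻¹' Iic y ∩ Iic t).eq_empty_or_nonempty with hempty | hne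
  · have hy0 : y ≤ 0 := ge_of_tendsto hbot <| (eventually_le_atBot t).mono fun s hs =>
      le_of_lt <| not_le.mp fun hFs => (eq_empty_iff_forall_notMem.mp hempty) s ⟨hFs, hs⟩
    rw [hempty, measure_empty, ENNReal.ofReal_eq_zero.mpr ((min_le_left _ _).trans hy0)]
  · obtain ⟨a, hFa, hT⟩ := F.mono.exists_preimage_Iic_inter_Iic_eq_Iic hcont hy hne
    rw [hT, F.measure_Iic hbot, sub_zero, hFa, min_eq_left hy.le]

theorem map_restrict_Iic (hbot : Tendsto F atBot (𝓝 0)) {t : ℝ}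
    (hcont : ContinuousOn F (Iic t)) :
    (F.measure.restrict (Iic t)).map F = volume.restrict (Ioc 0 (F t)) := by
  refine (Measure.ext_of_Iic _ _ fun y => ?_).symm
  rw [Measure.map_apply F.mono.measurable measurableSet_Iic,
    Measure.restrict_apply (F.mono.measurable measurableSet_Iic),
    F.measure_preimage_Iic_inter_Iic hbot hcont, Measure.restrict_apply measurableSet_Iic,
    inter_comm, Ioc_inter_Iic, Real.volume_Ioc, sub_zero, inf_comm]

end StieltjesFunction

/-- for a nondecreasing right-continuous `F` with `F(-∞) = 0`, continuous on
`(-∞, t₀]` and with `F(t₀) < 1`, the cumulative hazard satisfies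
`∫_{(-∞,t]} (1 - F(s))⁻¹ dμ_F(s) = -log(1 - F(t))`, i.e. `1 - F(t) = exp(-Λ(t))`,
for every `t ≤ t₀`. -/
theorem cumulative_hazard_eq_neg_log
    (F : StieltjesFunction ℝ) (hbot : Filter.Tendsto F Filter.atBot (nhds 0))
    (t₀ : ℝ) (hcont : ContinuousOn (⇑F) (Iic t₀)) (hF1 : F t₀ < 1)
    (t : ℝ) (ht : t ≤ t₀) :
    ∫ s in Iic t, (1 - F s)⁻¹ ∂F.measure = -Real.log (1 - F t) := by
  have hmeas : Measurable fun x : ℝ => (1 - x)⁻¹ := by fun_prop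
  calc ∫ s in Iic t, (1 - F s)⁻¹ ∂F.measure
      = ∫ x, (1 - x)⁻¹ ∂(F.measure.restrict (Iic t)).map F :=
        (integral_map F.mono.measurable.aemeasurable hmeas.aestronglyMeasurable).symm
    _ = ∫ x in Ioc 0 (F t), (1 - x)⁻¹ := by
        rw [F.map_restrict_Iic hbot (hcont.mono (Iic_subset_Iic.mpr ht))]
    _ = ∫ x in 0..F t, (1 - x)⁻¹ :=
        (intervalIntegral.integral_of_le (F.mono.le_of_tendsto hbot t)).symm
    _ = -Real.log (1 - F t) := integral_inv_one_sub ((F.mono ht).trans_lt hF1)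
end

section
/- Let Γ(t,s|x)=(‖K‖₂²/f(x))(1−F(t|x))(1−F(s|x))∫_{(−∞,t∧s]} dH^u(y|x)/(1−H(y⁻|x))². Assume f(x)>0, H(τ_c(x)⁻|x)<1, and the Hölder conditions |H^u(t|x)−H^u(s|x)|≤c|t−s|^{η'} and |F(t|x)−F(s|x)|≤c|t−s|^{η'}. Then for all s,t≤τ_c(x): Γ(s,s|x)−2Γ(s,t|x)+Γ(t,t|x) = (‖K‖₂²/f(x))·[(1−F(s∨t|x))²∫_{(s∧t,s∨t]} dH^u(y|x)/(1−H(y⁻|x))² + (F(s|x)−F(t|x))²∫_{(−∞,s∧t]} dH^u(y|x)/(1−H(y⁻|x))²], and there exists a constant C>0 (depending only on c, η', ‖K‖₂, f(x) and H(τ_c(x)⁻|x)) such that Γ(s,s|x)−2Γ(s,t|x)+Γ(t,t|x) ≤ C|s−t|^{η'}. -/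
open MeasureTheory Set Function

/-- The covariance function `Γ(t,s|x)` of the Gaussian limit of the Beran process, with
`K2 = ‖K‖₂²` and `fx = f(x)`. -/
noncomputable def GamCov (K2 fx : ℝ) (F H : ℝ → ℝ) (Hu : StieltjesFunction ℝ) (t s : ℝ) : ℝ :=
  K2 / fx * (1 - F t) * (1 - F s) *
    ∫ y in Iic (min t s), ((1 - leftLim H y)⁻¹) ^ 2 ∂Hu.measure

/-- the second-moment increment identity for the covariance function `Γ` of
the limiting Gaussian process of the Beran estimator, and the resulting Hölder-type bound
`Γ(s,s)-2Γ(s,t)+Γ(t,t) ≤ C|s-t|^{η'}` for `s,t ≤ τ_c(x)`. -/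
theorem gamma_increment_identity_and_bound
    (p : ℕ) (K : EuclideanSpace ℝ (Fin p) → ℝ) (hK0 : ∀ u, 0 ≤ K u)
    (F : ℝ → ℝ) (hF01 : ∀ t, 0 ≤ F t ∧ F t ≤ 1)
    (H : ℝ → ℝ) (hHmono : Monotone H)
    (Hu : StieltjesFunction ℝ) (hHu01 : ∀ t, 0 ≤ Hu t ∧ Hu t ≤ 1)
    (τc : ℝ) (hHτ : leftLim H τc < 1)
    (fx : ℝ) (hfx : 0 < fx)
    (c η' : ℝ) (hc : 0 < c) (hη' : 0 < η' ∧ η' ≤ 1)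
    (hHuHold : ∀ t s : ℝ, |Hu t - Hu s| ≤ c * |t - s| ^ η')
    (hFHold : ∀ t s : ℝ, |F t - F s| ≤ c * |t - s| ^ η') :
    (∀ s ≤ τc, ∀ t ≤ τc,
      GamCov (∫ u, K u ^ 2) fx F H Hu s s - 2 * GamCov (∫ u, K u ^ 2) fx F H Hu s t +
          GamCov (∫ u, K u ^ 2) fx F H Hu t t =
        (∫ u, K u ^ 2) / fx *
          ((1 - F (max s t)) ^ 2 *
              (∫ y in Ioc (min s t) (max s t), ((1 - leftLim H y)⁻¹) ^ 2 ∂Hu.measure) +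
            (F s - F t) ^ 2 *
              ∫ y in Iic (min s t), ((1 - leftLim H y)⁻¹) ^ 2 ∂Hu.measure)) ∧
    (∃ C > 0, ∀ s ≤ τc, ∀ t ≤ τc,
      GamCov (∫ u, K u ^ 2) fx F H Hu s s - 2 * GamCov (∫ u, K u ^ 2) fx F H Hu s t +
          GamCov (∫ u, K u ^ 2) fx F H Hu t t ≤ C * |s - t| ^ η') := by
  set K2 : ℝ := ∫ u, K u ^ 2 with hK2def
  have hK2 : 0 ≤ K2 := integral_nonneg fun u => sq_nonneg _
  set A : ℝ := K2 / fx with hAdef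
  have hA0 : 0 ≤ A := div_nonneg hK2 hfx.le
  set g : ℝ → ℝ := fun y => ((1 - leftLim H y)⁻¹) ^ 2 with hgdef
  set D : ℝ := ((1 - leftLim H τc)⁻¹) ^ 2 with hDdef
  have hτpos : (0:ℝ) < 1 - leftLim H τc := by linarith
  have hD0 : 0 < D := by positivity
  have hg_nonneg : ∀ y, 0 ≤ g y := fun y => sq_nonneg _
  have hgD : ∀ y ≤ τc, g y ≤ D := by
    intro y hy
    have h1 : leftLim H y ≤ leftLim H τc := hHmono.leftLim hy
    have h2 : (0:ℝ) < 1 - leftLim H y := by linarith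
    have h3 : (1 - leftLim H y)⁻¹ ≤ (1 - leftLim H τc)⁻¹ :=
      inv_anti₀ hτpos (by linarith)
    exact pow_le_pow_left₀ (inv_nonneg.2 h2.le) h3 2
  have hgmeas : Measurable g := by
    have : Measurable (leftLim H) := (hHmono.leftLim).measurable
    exact ((measurable_const.sub this).inv).pow_const 2
  -- the measure at -∞
  have hbdd : BddBelow (range Hu) := ⟨0, fun x ⟨y, hy⟩ => hy ▸ (hHu01 y).1⟩
  set l : ℝ := ⨅ i, Hu i with hldef
  have htendsto : Filter.Tendsto Hu Filter.atBot (nhds l) := tendsto_atBot_ciInf Hu.mono hbdd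
  have hl0 : 0 ≤ l := le_ciInf fun i => (hHu01 i).1
  have hll : ∀ x, l ≤ Hu x := fun x => ciInf_le hbdd x
  have hmeasIic : ∀ x : ℝ, Hu.measure (Iic x) = ENNReal.ofReal (Hu x - l) :=
    fun x => Hu.measure_Iic htendsto x
  have hIicfin : ∀ x : ℝ, Hu.measure (Iic x) < ⊤ := by
    intro x; rw [hmeasIic]; exact ENNReal.ofReal_lt_top
  -- integrability
  have hInt : ∀ r ≤ τc, IntegrableOn g (Iic r) Hu.measure := by
    intro r hr
    apply Measure.integrableOn_of_bounded (M := D) (hIicfin r).ne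
      hgmeas.aestronglyMeasurable
    filter_upwards [ae_restrict_mem measurableSet_Iic] with y hy
    rw [Real.norm_eq_abs, abs_of_nonneg (hg_nonneg y)]
    exact hgD y (le_trans hy hr)
  -- splitting of the integral
  have hsplit : ∀ a b : ℝ, a ≤ b → b ≤ τc →
      (∫ y in Iic b, g y ∂Hu.measure) =
        (∫ y in Iic a, g y ∂Hu.measure) + ∫ y in Ioc a b, g y ∂Hu.measure := by
    intro a b hab hb
    rw [← Iic_union_Ioc_eq_Iic hab]
    exact setIntegral_union (Iic_disjoint_Ioc le_rfl) measurableSet_Ioc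
      (hInt a (hab.trans hb)) (((hInt b hb).mono_set Ioc_subset_Iic_self))
  -- the identity in the ordered case
  have main : ∀ s t : ℝ, s ≤ t → t ≤ τc →
      GamCov K2 fx F H Hu s s - 2 * GamCov K2 fx F H Hu s t + GamCov K2 fx F H Hu t t =
        A * ((1 - F t) ^ 2 * (∫ y in Ioc s t, g y ∂Hu.measure) +
          (F s - F t) ^ 2 * ∫ y in Iic s, g y ∂Hu.measure) := by
    intro s t hst ht
    have hmin : min s t = s := min_eq_left hst
    simp only [GamCov, min_self, hmin, ← hAdef, ← hgdef]
    rw [hsplit s t hst ht]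
    ring
  have hGcomm : ∀ a b : ℝ, GamCov K2 fx F H Hu a b = GamCov K2 fx F H Hu b a := by
    intro a b
    simp only [GamCov, min_comm a b]
    ring
  have identity : ∀ s ≤ τc, ∀ t ≤ τc,
      GamCov K2 fx F H Hu s s - 2 * GamCov K2 fx F H Hu s t + GamCov K2 fx F H Hu t t =
        A * ((1 - F (max s t)) ^ 2 * (∫ y in Ioc (min s t) (max s t), g y ∂Hu.measure) +
          (F s - F t) ^ 2 * ∫ y in Iic (min s t), g y ∂Hu.measure) := by
    intro s hs t ht
    rcases le_total s t with h | h
    · rw [min_eq_left h, max_eq_right h]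
      exact main s t h ht
    · have h2 := main t s h hs
      rw [min_eq_right h, max_eq_left h, hGcomm s t,
        show (F s - F t) ^ 2 = (F t - F s) ^ 2 by ring]
      linarith [h2]
  refine ⟨identity, ?_⟩
  -- the bound
  refine ⟨2 * A * D * c + 1, by positivity, ?_⟩
  intro s hs t ht
  rw [identity s hs t ht]
  set m := min s t with hm
  set M := max s t with hM
  have hmM : m ≤ M := min_le_max
  have hMτ : M ≤ τc := max_le hs ht
  have hmτ : m ≤ τc := hmM.trans hMτ
  set e : ℝ := |s - t| ^ η' with hedef
  have he0 : 0 ≤ e := Real.rpow_nonneg (abs_nonneg _) _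
  set I1 : ℝ := ∫ y in Iic m, g y ∂Hu.measure with hI1
  set I2 : ℝ := ∫ y in Ioc m M, g y ∂Hu.measure with hI2
  have hI1nonneg : 0 ≤ I1 :=
    setIntegral_nonneg measurableSet_Iic fun y _ => hg_nonneg y
  have hI2nonneg : 0 ≤ I2 :=
    setIntegral_nonneg measurableSet_Ioc fun y _ => hg_nonneg y
  -- bound on I1
  have hI1le : I1 ≤ D := by
    have h1 : ‖I1‖ ≤ D * (Hu.measure (Iic m)).toReal := by
      apply norm_setIntegral_le_of_norm_le_const (hIicfin m) _
      intro y hy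
      rw [Real.norm_eq_abs, abs_of_nonneg (hg_nonneg y)]
      exact hgD y (le_trans hy hmτ)
    have h2 : (Hu.measure (Iic m)).toReal ≤ 1 := by
      rw [hmeasIic, ENNReal.toReal_ofReal (by linarith [hll m])]
      have := (hHu01 m).2
      linarith
    calc I1 ≤ ‖I1‖ := le_abs_self _
      _ ≤ D * (Hu.measure (Iic m)).toReal := h1
      _ ≤ D * 1 := by
          exact mul_le_mul_of_nonneg_left h2 hD0.le
      _ = D := mul_one D
  -- bound on I2
  have hI2le : I2 ≤ D * (c * e) := by
    have hmeasIoc : Hu.measure (Ioc m M) = ENNReal.ofReal (Hu M - Hu m) := Hu.measure_Ioc m M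
    have hfin : Hu.measure (Ioc m M) < ⊤ := by rw [hmeasIoc]; exact ENNReal.ofReal_lt_top
    have h1 : ‖I2‖ ≤ D * (Hu.measure (Ioc m M)).toReal := by
      apply norm_setIntegral_le_of_norm_le_const hfin _
      intro y hy
      rw [Real.norm_eq_abs, abs_of_nonneg (hg_nonneg y)]
      exact hgD y (le_trans hy.2 hMτ)
    have hHumm : Hu m ≤ Hu M := Hu.mono hmM
    have h2 : (Hu.measure (Ioc m M)).toReal ≤ c * e := by
      rw [hmeasIoc, ENNReal.toReal_ofReal (by linarith)]
      have h3 : |Hu M - Hu m| ≤ c * |M - m| ^ η' := hHuHold M m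
      have h4 : |M - m| = |s - t| := by
        rw [abs_of_nonneg (by linarith : (0:ℝ) ≤ M - m), hm, hM, max_sub_min_eq_abs, abs_sub_comm]
      rw [abs_of_nonneg (by linarith)] at h3
      rw [h4] at h3
      exact h3
    calc I2 ≤ ‖I2‖ := le_abs_self _
      _ ≤ D * (Hu.measure (Ioc m M)).toReal := h1
      _ ≤ D * (c * e) := mul_le_mul_of_nonneg_left h2 hD0.le
  -- bound on the F-terms
  have hb2 : (1 - F M) ^ 2 ≤ 1 := by
    have h1 := (hF01 M).1
    have h2 := (hF01 M).2
    nlinarith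
  have hd2 : (F s - F t) ^ 2 ≤ c * e := by
    have h1 : |F s - F t| ≤ c * e := hFHold s t
    have h2 : |F s - F t| ≤ 1 := by
      have := (hF01 s).1; have := (hF01 s).2
      have := (hF01 t).1; have := (hF01 t).2
      rw [abs_le]; constructor <;> linarith
    calc (F s - F t) ^ 2 = |F s - F t| * |F s - F t| := by rw [← sq_abs, sq]
      _ ≤ (c * e) * 1 := mul_le_mul h1 h2 (abs_nonneg _) (by positivity)
      _ = c * e := mul_one _
  -- assembling
  have hce : 0 ≤ c * e := by positivity
  have hstep1 : (1 - F M) ^ 2 * I2 ≤ D * (c * e) := by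
    calc (1 - F M) ^ 2 * I2 ≤ I2 := mul_le_of_le_one_left hI2nonneg hb2
      _ ≤ D * (c * e) := hI2le
  have hstep2 : (F s - F t) ^ 2 * I1 ≤ (c * e) * D :=
    mul_le_mul hd2 hI1le hI1nonneg hce
  have hstep3 : (1 - F M) ^ 2 * I2 + (F s - F t) ^ 2 * I1 ≤ 2 * D * c * e := by
    linarith
  have hstep4 : A * ((1 - F M) ^ 2 * I2 + (F s - F t) ^ 2 * I1) ≤ A * (2 * D * c * e) :=
    mul_le_mul_of_nonneg_left hstep3 hA0
  have : A * (2 * D * c * e) ≤ (2 * A * D * c + 1) * e := by nlinarith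
  linarith
end

section
/- Let γ>0 and let F₀ be a distribution function on ℝ with 1−F₀(t)>0 for all t and lim_{t→∞}(1−F₀(yt))/(1−F₀(t))=y^{−1/γ} for every y>0 (Fréchet domain of attraction / regular variation of the survival function with index −1/γ). Let p∈(0,1] and F=p·F₀. Then for every y∈(0,1): lim_{τ→∞} (F(y²τ)−F(yτ))/(F(yτ)−F(τ)) = y^{−1/γ}, and consequently γ_{y,τ}:=−1/log_y((F(y²τ)−F(yτ))/(F(yτ)−F(τ))) → γ as τ→∞. -/
open Filter

/-- In the mixture cure model `F = p·F₀` with `F₀` heavy tailed with extreme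
value index `γ > 0` (i.e. the survival function `1 - F₀` is regularly varying with index
`-1/γ`), for every `y ∈ (0,1)` the ratio `(F(y²τ)-F(yτ))/(F(yτ)-F(τ))` converges to
`y^{-1/γ}` as `τ → ∞`, and consequently `γ_{y,τ} = -1/log_y(ratio)` converges to `γ`. -/
theorem extrapolated_evi_tendsto
    (γ : ℝ) (hγ : 0 < γ) (F₀ : ℝ → ℝ) (hF₀mono : Monotone F₀)
    (hF₀top : Tendsto F₀ atTop (nhds 1)) (hF₀lt : ∀ t, F₀ t < 1)
    (hRV : ∀ y : ℝ, 0 < y →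
      Tendsto (fun t : ℝ => (1 - F₀ (y * t)) / (1 - F₀ t)) atTop (nhds (y ^ (-1 / γ))))
    (p : ℝ) (hp0 : 0 < p) (hp1 : p ≤ 1) (y : ℝ) (hy : y ∈ Set.Ioo (0 : ℝ) 1) :
    Tendsto (fun τ : ℝ =>
        (p * F₀ (y ^ 2 * τ) - p * F₀ (y * τ)) / (p * F₀ (y * τ) - p * F₀ τ))
      atTop (nhds (y ^ (-1 / γ))) ∧
    Tendsto (fun τ : ℝ =>
        -1 / (Real.log ((p * F₀ (y ^ 2 * τ) - p * F₀ (y * τ)) /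
            (p * F₀ (y * τ) - p * F₀ τ)) / Real.log y))
      atTop (nhds γ) := by
  obtain ⟨hy0, hy1⟩ := hy
  set a : ℝ := y ^ (-1 / γ) with ha
  have hS : ∀ t, 0 < 1 - F₀ t := fun t => by linarith [hF₀lt t]
  have ha1 : 1 < a := by
    rw [ha, Real.one_lt_rpow_iff_of_pos hy0]
    right
    constructor
    · exact hy1
    · exact div_neg_of_neg_of_pos (by norm_num) hγ
  have ha0 : 0 < a := lt_trans one_pos ha1
  -- limits of survival ratios
  have h1 : Tendsto (fun τ : ℝ => (1 - F₀ (y * τ)) / (1 - F₀ τ)) atTop (nhds a) :=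
    hRV y hy0
  have hsq : (y ^ 2 : ℝ) ^ (-1 / γ) = a ^ 2 := by
    rw [ha, ← Real.rpow_natCast y 2, ← Real.rpow_natCast (y ^ (-1/γ)) 2,
      ← Real.rpow_mul hy0.le, ← Real.rpow_mul hy0.le]
    norm_num
    ring_nf
  have h2 : Tendsto (fun τ : ℝ => (1 - F₀ (y ^ 2 * τ)) / (1 - F₀ τ)) atTop (nhds (a ^ 2)) := by
    have := hRV (y ^ 2) (by positivity)
    rwa [hsq] at this
  -- main ratio limit
  have hne : (1 : ℝ) - a ≠ 0 := by intro h; linarith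
  have hnum : Tendsto (fun τ : ℝ =>
      (1 - F₀ (y * τ)) / (1 - F₀ τ) - (1 - F₀ (y ^ 2 * τ)) / (1 - F₀ τ)) atTop
      (nhds (a - a ^ 2)) := h1.sub h2
  have hden : Tendsto (fun τ : ℝ => 1 - (1 - F₀ (y * τ)) / (1 - F₀ τ)) atTop
      (nhds (1 - a)) := tendsto_const_nhds.sub h1
  have hdiv := hnum.div hden hne
  have hval : (a - a ^ 2) / (1 - a) = a := by
    field_simp
  rw [hval] at hdiv
  have heq : ∀ τ : ℝ,
      (p * F₀ (y ^ 2 * τ) - p * F₀ (y * τ)) / (p * F₀ (y * τ) - p * F₀ τ)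
      = ((1 - F₀ (y * τ)) / (1 - F₀ τ) - (1 - F₀ (y ^ 2 * τ)) / (1 - F₀ τ)) /
        (1 - (1 - F₀ (y * τ)) / (1 - F₀ τ)) := by
    intro τ
    have hSτ := (hS τ).ne'
    have e1 : p * F₀ (y ^ 2 * τ) - p * F₀ (y * τ)
        = p * ((1 - F₀ (y * τ)) - (1 - F₀ (y ^ 2 * τ))) := by ring
    have e2 : p * F₀ (y * τ) - p * F₀ τ
        = p * ((1 - F₀ τ) - (1 - F₀ (y * τ))) := by ring
    rw [e1, e2, mul_div_mul_left _ _ hp0.ne']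
    rw [div_sub_div_same, eq_comm]
    have : (1 : ℝ) - (1 - F₀ (y * τ)) / (1 - F₀ τ)
        = ((1 - F₀ τ) - (1 - F₀ (y * τ))) / (1 - F₀ τ) := by
      field_simp
    rw [this]
    by_cases hB : (1 - F₀ τ) - (1 - F₀ (y * τ)) = 0
    · rw [hB]; simp
    · field_simp
  have hmain : Tendsto (fun τ : ℝ =>
      (p * F₀ (y ^ 2 * τ) - p * F₀ (y * τ)) / (p * F₀ (y * τ) - p * F₀ τ))
      atTop (nhds a) := by
    simpa only [heq, Pi.div_def] using hdiv
  refine ⟨hmain, ?_⟩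
  -- second part
  have hlogy : Real.log y ≠ 0 := by
    have := Real.log_neg hy0 hy1
    linarith
  have hloga : Real.log a = (-1 / γ) * Real.log y := Real.log_rpow hy0 _
  have hlogR : Tendsto (fun τ : ℝ => Real.log
      ((p * F₀ (y ^ 2 * τ) - p * F₀ (y * τ)) / (p * F₀ (y * τ) - p * F₀ τ)))
      atTop (nhds (Real.log a)) :=
    (Real.continuousAt_log ha0.ne').tendsto.comp hmain
  have hquot : Tendsto (fun τ : ℝ => Real.log
      ((p * F₀ (y ^ 2 * τ) - p * F₀ (y * τ)) / (p * F₀ (y * τ) - p * F₀ τ)) / Real.log y)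
      atTop (nhds (-1 / γ)) := by
    have := hlogR.div_const (Real.log y)
    rw [hloga, mul_div_assoc, div_self hlogy, mul_one] at this
    exact this
  have hfinal := (tendsto_const_nhds (α := ℝ) (x := (-1 : ℝ))).div hquot
    (by positivity)
  have : (-1 : ℝ) / (-1 / γ) = γ := by field_simp
  rwa [this] at hfinal
end

section
/- Let γ>0, p∈(0,1], F₀ a distribution function with 1−F₀(t)>0 for all t and lim_{t→∞}(1−F₀(yt))/(1−F₀(t))=y^{−1/γ} for every y>0, and F=p·F₀. Fix y_1,y_2∈(0,1) and set γ_{y_2,τ}=−1/log_{y_2}((F(y_2²τ)−F(y_2τ))/(F(y_2τ)−F(τ))) and p_{y_1,y_2,τ}=F(τ)+(F(τ)−F(y_1τ))/(y_1^{−1/γ_{y_2,τ}}−1). Then lim_{τ→∞} p_{y_1,y_2,τ} = p. -/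
/-!
The increments of `F = p F₀` are those of the tail `p (1 - F₀)`, which is regularly varying with
index `-1/γ`; hence the ratio of consecutive increments on the geometric grid `τ, y₂τ, y₂²τ` tends
to `y₂^(-1/γ)`, and its `log_{y₂}` recovers the index. The denominator of the correction term thus
tends to `y₁^(-1/γ) - 1 ≠ 0`, while its numerator `F(τ) - F(y₁τ)` tends to `p - p = 0`.
-/

open Filter Topology Real

lemma rpow_ne_one_of_ne_one {y α : ℝ} (hy : 0 < y) (hy1 : y ≠ 1) (hα : α ≠ 0) : y ^ α ≠ 1 := by
  intro h
  have := congrArg log h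
  rw [log_rpow hy, log_one] at this
  exact mul_ne_zero hα (log_ne_zero_of_pos_of_ne_one hy hy1) this

section TailExtrapolation

variable {F : ℝ → ℝ} {L α y : ℝ}

lemma tendsto_increment_ratio (hne : ∀ᶠ t in atTop, F t ≠ L)
    (hRV : ∀ y, 0 < y → Tendsto (fun t => (L - F (y * t)) / (L - F t)) atTop (𝓝 (y ^ α)))
    (hα : α ≠ 0) (hy : 0 < y) (hy1 : y ≠ 1) :
    Tendsto (fun t => (F (y ^ 2 * t) - F (y * t)) / (F (y * t) - F t)) atTop (𝓝 (y ^ α)) := by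
  have ha : 1 - y ^ α ≠ 0 := sub_ne_zero.mpr (rpow_ne_one_of_ne_one hy hy1 hα).symm
  have h₂ : Tendsto (fun t => (L - F (y ^ 2 * t)) / (L - F t)) atTop (𝓝 ((y ^ α) ^ 2)) := by
    simpa only [rpow_pow_comm hy.le] using hRV (y ^ 2) (by positivity)
  have hlim := ((hRV y hy).sub h₂).div (tendsto_const_nhds.sub (hRV y hy)) ha
  rw [show (y ^ α - (y ^ α) ^ 2) / (1 - y ^ α) = y ^ α by field_simp] at hlim
  refine hlim.congr' ?_
  filter_upwards [hne] with t ht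
  have hS : L - F t ≠ 0 := sub_ne_zero.mpr ht.symm
  simp only [Pi.div_apply]
  rw [← sub_div, one_sub_div hS, div_div_div_cancel_right₀ hS]
  congr 1 <;> ring

lemma tendsto_log_increment_ratio_div_log (hne : ∀ᶠ t in atTop, F t ≠ L)
    (hRV : ∀ y, 0 < y → Tendsto (fun t => (L - F (y * t)) / (L - F t)) atTop (𝓝 (y ^ α)))
    (hα : α ≠ 0) (hy : 0 < y) (hy1 : y ≠ 1) :
    Tendsto (fun t => log ((F (y ^ 2 * t) - F (y * t)) / (F (y * t) - F t)) / log y)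
      atTop (𝓝 α) := by
  have := ((tendsto_increment_ratio hne hRV hα hy hy1).log (rpow_pos_of_pos hy α).ne').div_const
    (log y)
  rwa [log_rpow hy, mul_div_cancel_right₀ _ (log_ne_zero_of_pos_of_ne_one hy hy1)] at this

theorem tendsto_extrapolated_limit (hF : Tendsto F atTop (𝓝 L)) (hne : ∀ᶠ t in atTop, F t ≠ L)
    (hRV : ∀ y, 0 < y → Tendsto (fun t => (L - F (y * t)) / (L - F t)) atTop (𝓝 (y ^ α)))
    (hα : α ≠ 0) {y₁ y₂ : ℝ} (hy₁ : 0 < y₁) (hy₁1 : y₁ ≠ 1) (hy₂ : 0 < y₂) (hy₂1 : y₂ ≠ 1) :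
    Tendsto (fun τ => F τ + (F τ - F (y₁ * τ)) /
        (y₁ ^ (log ((F (y₂ ^ 2 * τ) - F (y₂ * τ)) / (F (y₂ * τ) - F τ)) / log y₂) - 1))
      atTop (𝓝 L) := by
  have hden := (tendsto_const_nhds.rpow (tendsto_log_increment_ratio_div_log hne hRV hα hy₂ hy₂1)
    (Or.inl hy₁.ne')).sub_const 1
  have hnum := hF.sub (hF.comp (tendsto_id.const_mul_atTop hy₁))
  have hden_ne : y₁ ^ α - 1 ≠ 0 := sub_ne_zero.mpr (rpow_ne_one_of_ne_one hy₁ hy₁1 hα)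
  simpa only [sub_self, zero_div, add_zero, Pi.div_apply, Function.comp_apply, id] using
    hF.add (hnum.div hden hden_ne)

end TailExtrapolation

theorem extrapolated_cure_rate_tendsto_general
    (γ : ℝ) (hγ : 0 < γ) (F₀ : ℝ → ℝ)
    (hF₀top : Tendsto F₀ atTop (nhds 1)) (hF₀lt : ∀ t, F₀ t < 1)
    (hRV : ∀ y : ℝ, 0 < y →
      Tendsto (fun t : ℝ => (1 - F₀ (y * t)) / (1 - F₀ t)) atTop (nhds (y ^ (-1 / γ))))
    (p : ℝ) (hp0 : 0 < p)
    (y₁ y₂ : ℝ) (hy₁ : y₁ ∈ Set.Ioo (0 : ℝ) 1) (hy₂ : y₂ ∈ Set.Ioo (0 : ℝ) 1) :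
    Tendsto (fun τ : ℝ =>
        p * F₀ τ + (p * F₀ τ - p * F₀ (y₁ * τ)) /
          (y₁ ^ (-1 / (-1 / (Real.log ((p * F₀ (y₂ ^ 2 * τ) - p * F₀ (y₂ * τ)) /
              (p * F₀ (y₂ * τ) - p * F₀ τ)) / Real.log y₂))) - 1))
      atTop (nhds p) := by
  have hF : Tendsto (fun t => p * F₀ t) atTop (𝓝 p) := by simpa using hF₀top.const_mul p
  have hne : ∀ t, p * F₀ t ≠ p := fun t h =>
    (hF₀lt t).ne (mul_left_cancel₀ hp0.ne' (h.trans (mul_one p).symm))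
  have hRVp : ∀ y, 0 < y → Tendsto (fun t => (p - p * F₀ (y * t)) / (p - p * F₀ t)) atTop
      (𝓝 (y ^ (-1 / γ))) := fun y hy => by
    simpa only [← mul_one_sub, mul_div_mul_left _ _ hp0.ne'] using hRV y hy
  have hα : -1 / γ ≠ 0 := div_ne_zero (by norm_num) hγ.ne'
  simpa only [neg_div, div_neg, neg_neg, one_div_one_div] using
    tendsto_extrapolated_limit hF (Eventually.of_forall hne) hRVp hα hy₁.1 hy₁.2.ne hy₂.1 hy₂.2.ne

/-- In the mixture cure model `F = p·F₀` with `F₀` heavy tailed with extreme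
value index `γ > 0`, for fixed `y₁, y₂ ∈ (0,1)` the extrapolated non-cure rate
`p_{y₁,y₂,τ} = F(τ) + (F(τ) - F(y₁τ))/(y₁^{-1/γ_{y₂,τ}} - 1)`, where
`γ_{y₂,τ} = -1/log_{y₂}((F(y₂²τ)-F(y₂τ))/(F(y₂τ)-F(τ)))`, converges to `p` as `τ → ∞`. -/
theorem extrapolated_cure_rate_tendsto
    (γ : ℝ) (hγ : 0 < γ) (F₀ : ℝ → ℝ) (hF₀mono : Monotone F₀)
    (hF₀top : Tendsto F₀ atTop (nhds 1)) (hF₀lt : ∀ t, F₀ t < 1)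
    (hRV : ∀ y : ℝ, 0 < y →
      Tendsto (fun t : ℝ => (1 - F₀ (y * t)) / (1 - F₀ t)) atTop (nhds (y ^ (-1 / γ))))
    (p : ℝ) (hp0 : 0 < p) (hp1 : p ≤ 1)
    (y₁ y₂ : ℝ) (hy₁ : y₁ ∈ Set.Ioo (0 : ℝ) 1) (hy₂ : y₂ ∈ Set.Ioo (0 : ℝ) 1) :
    Tendsto (fun τ : ℝ =>
        p * F₀ τ + (p * F₀ τ - p * F₀ (y₁ * τ)) /
          (y₁ ^ (-1 / (-1 / (Real.log ((p * F₀ (y₂ ^ 2 * τ) - p * F₀ (y₂ * τ)) /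
              (p * F₀ (y₂ * τ) - p * F₀ τ)) / Real.log y₂))) - 1))
      atTop (nhds p) :=
  extrapolated_cure_rate_tendsto_general γ hγ F₀ hF₀top hF₀lt hRV p hp0 y₁ y₂ hy₁ hy₂
end
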